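/- Exponential bound for the magnetic Hamiltonian flow: let A : ℝ³ → ℝ³ be continuous, V : ℝ³ → ℝ, and C₁ > 0 with V(z) ≥ −C₁(1 + ‖z‖²) for all z ∈ ℝ³. Let x, ξ : [0,∞) → ℝ³ be differentiable with x'(t) = ξ(t) + A(x(t)) for all t ≥ 0, suppose the energy is conserved along the trajectory, i.e. there exists E ∈ ℝ with ½‖ξ(t) + A(x(t))‖² + V(x(t)) = E for all t ≥ 0, and suppose there exist M, C₂ > 0 with ‖A(x(t))‖ ≤ M e^{C₂ t} for all t ≥ 0. Then there exists K > 0 such that ‖x(t)‖ + ‖ξ(t)‖ ≤ K e^{K t} for all t ≥ 0. -/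
import Mathlib

set_option maxHeartbeats 1000000

/-- The Euclidean norm on `ℝ³`. -/
noncomputable def enorm3 (a : Fin 3 → ℝ) : ℝ := Real.sqrt (∑ k, (a k) ^ 2)

lemma enorm3_eq_norm (a : Fin 3 → ℝ) :
    enorm3 a = ‖(WithLp.equiv 2 (Fin 3 → ℝ)).symm a‖ := by
  rw [EuclideanSpace.norm_eq]
  simp [enorm3, Real.norm_eq_abs, sq_abs]

lemma enorm3_nonneg (a : Fin 3 → ℝ) : 0 ≤ enorm3 a := Real.sqrt_nonneg _

lemma enorm3_sq (a : Fin 3 → ℝ) : enorm3 a ^ 2 = ∑ k, (a k) ^ 2 := by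
  rw [enorm3, Real.sq_sqrt]
  positivity

lemma enorm3_add_le (a b : Fin 3 → ℝ) : enorm3 (a + b) ≤ enorm3 a + enorm3 b := by
  simp only [enorm3_eq_norm]
  exact norm_add_le _ _

lemma enorm3_neg (a : Fin 3 → ℝ) : enorm3 (-a) = enorm3 a := by
  simp only [enorm3_eq_norm]
  exact norm_neg _

lemma pi_norm_le_enorm3 (a : Fin 3 → ℝ) : ‖a‖ ≤ enorm3 a := by
  rw [pi_norm_le_iff_of_nonneg (enorm3_nonneg a)]
  intro i
  rw [Real.norm_eq_abs, ← Real.sqrt_sq_eq_abs, enorm3]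
  apply Real.sqrt_le_sqrt
  exact Finset.single_le_sum (f := fun k => (a k) ^ 2) (fun k _ => sq_nonneg _) (Finset.mem_univ i)

lemma enorm3_le_pi_norm (a : Fin 3 → ℝ) : enorm3 a ≤ Real.sqrt 3 * ‖a‖ := by
  rw [enorm3, ← Real.sqrt_sq (norm_nonneg a), ← Real.sqrt_mul (by norm_num)]
  apply Real.sqrt_le_sqrt
  have h : ∀ k : Fin 3, (a k) ^ 2 ≤ ‖a‖ ^ 2 := by
    intro k
    have := norm_le_pi_norm a k
    rw [Real.norm_eq_abs] at this
    calc (a k)^2 = |a k|^2 := (sq_abs _).symm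
    _ ≤ ‖a‖^2 := by apply pow_le_pow_left₀ (abs_nonneg _) this 2
  calc ∑ k, (a k)^2 ≤ ∑ _k : Fin 3, ‖a‖^2 := Finset.sum_le_sum fun k _ => h k
  _ = 3 * ‖a‖^2 := by simp [Finset.sum_const]

/-- **Exponential bound for the magnetic Hamiltonian flow**: if `V ≥ −C₁(1+‖z‖²)`,
`x' = ξ + A(x)`, the energy `½‖ξ+A(x)‖² + V(x)` is conserved, and `‖A(x(t))‖ ≤ M e^{C₂t}`,
then `‖x(t)‖ + ‖ξ(t)‖ ≤ K e^{Kt}` for some `K > 0`. -/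
theorem hamiltonian_flow_exponential_bound
    (A : (Fin 3 → ℝ) → (Fin 3 → ℝ)) (hA : Continuous A)
    (V : (Fin 3 → ℝ) → ℝ) (C₁ : ℝ) (hC₁ : 0 < C₁)
    (hV : ∀ z, -C₁ * (1 + enorm3 z ^ 2) ≤ V z)
    (x ξ : ℝ → (Fin 3 → ℝ))
    (hx : ∀ t, 0 ≤ t → HasDerivAt x (ξ t + A (x t)) t)
    (hξ : ∀ t, 0 ≤ t → DifferentiableAt ℝ ξ t)
    (E : ℝ) (hE : ∀ t, 0 ≤ t → (1 / 2) * enorm3 (ξ t + A (x t)) ^ 2 + V (x t) = E)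
    (M C₂ : ℝ) (hM : 0 < M) (hC₂ : 0 < C₂)
    (hAb : ∀ t, 0 ≤ t → enorm3 (A (x t)) ≤ M * Real.exp (C₂ * t)) :
    ∃ K : ℝ, 0 < K ∧ ∀ t, 0 ≤ t → enorm3 (x t) + enorm3 (ξ t) ≤ K * Real.exp (K * t) := by
  set ε : ℝ := Real.sqrt (2 * |E| + 2 * C₁) with hε
  set c : ℝ := Real.sqrt (2 * C₁) with hc
  set K₀ : ℝ := Real.sqrt 3 * c with hK₀
  set δ : ℝ := ‖x 0‖ with hδ
  have hεnn : 0 ≤ ε := Real.sqrt_nonneg _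
  have hcpos : 0 < c := Real.sqrt_pos.2 (by linarith)
  have h3pos : (0:ℝ) < Real.sqrt 3 := Real.sqrt_pos.2 (by norm_num)
  have hK₀pos : 0 < K₀ := mul_pos h3pos hcpos
  have hδnn : 0 ≤ δ := norm_nonneg _
  have hεsq : ε ^ 2 = 2 * |E| + 2 * C₁ := Real.sq_sqrt (by positivity)
  have hcsq : c ^ 2 = 2 * C₁ := Real.sq_sqrt (by positivity)
  -- key bound from energy conservation
  have hkey : ∀ t, 0 ≤ t → enorm3 (ξ t + A (x t)) ≤ ε + c * enorm3 (x t) := by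
    intro t ht
    have h1 := hE t ht
    have h2 := hV (x t)
    have hs : 0 ≤ enorm3 (x t) := enorm3_nonneg _
    have hv : 0 ≤ enorm3 (ξ t + A (x t)) := enorm3_nonneg _
    have habs : E ≤ |E| := le_abs_self E
    have hsq : enorm3 (ξ t + A (x t)) ^ 2 ≤ (ε + c * enorm3 (x t)) ^ 2 := by
      nlinarith [mul_nonneg (mul_nonneg hεnn hcpos.le) hs]
    calc enorm3 (ξ t + A (x t))
        = Real.sqrt (enorm3 (ξ t + A (x t)) ^ 2) := (Real.sqrt_sq hv).symm
      _ ≤ Real.sqrt ((ε + c * enorm3 (x t)) ^ 2) := Real.sqrt_le_sqrt hsq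
      _ = ε + c * enorm3 (x t) := Real.sqrt_sq (by positivity)
  -- Grönwall
  have hgron : ∀ t, 0 ≤ t → ‖x t‖ ≤ gronwallBound δ K₀ ε t := by
    intro t ht
    have := norm_le_gronwallBound_of_norm_deriv_right_le (E := Fin 3 → ℝ)
      (f := x) (f' := fun τ => ξ τ + A (x τ)) (δ := δ) (K := K₀) (ε := ε) (a := 0) (b := t)
      (fun τ hτ => (hx τ hτ.1).continuousAt.continuousWithinAt)
      (fun τ hτ => (hx τ hτ.1).hasDerivWithinAt)
      le_rfl
      (fun τ hτ => by
        calc ‖ξ τ + A (x τ)‖ ≤ enorm3 (ξ τ + A (x τ)) := pi_norm_le_enorm3 _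
          _ ≤ ε + c * enorm3 (x τ) := hkey τ hτ.1
          _ ≤ ε + c * (Real.sqrt 3 * ‖x τ‖) := by
              have := enorm3_le_pi_norm (x τ)
              nlinarith
          _ = K₀ * ‖x τ‖ + ε := by ring)
      t ⟨ht, le_rfl⟩
    simpa using this
  -- bound the gronwallBound by an exponential
  have hgB : ∀ t, 0 ≤ t → ‖x t‖ ≤ (δ + ε / K₀) * Real.exp (K₀ * t) := by
    intro t ht
    have h1 := hgron t ht
    rw [gronwallBound_of_K_ne_0 hK₀pos.ne'] at h1
    have he : 0 < Real.exp (K₀ * t) := Real.exp_pos _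
    have hεK : 0 ≤ ε / K₀ := div_nonneg hεnn hK₀pos.le
    nlinarith
  set B : ℝ := Real.sqrt 3 * (δ + ε / K₀) with hB
  have hBnn : 0 ≤ B := by positivity
  have hxB : ∀ t, 0 ≤ t → enorm3 (x t) ≤ B * Real.exp (K₀ * t) := by
    intro t ht
    calc enorm3 (x t) ≤ Real.sqrt 3 * ‖x t‖ := enorm3_le_pi_norm _
      _ ≤ B * Real.exp (K₀ * t) := by
          have := hgB t ht
          rw [hB, mul_assoc]
          exact mul_le_mul_of_nonneg_left (by nlinarith [Real.exp_pos (K₀ * t)]) h3pos.le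
  -- bound on ξ
  have hξB : ∀ t, 0 ≤ t →
      enorm3 (ξ t) ≤ ε + c * (B * Real.exp (K₀ * t)) + M * Real.exp (C₂ * t) := by
    intro t ht
    have h1 : enorm3 (ξ t) ≤ enorm3 (ξ t + A (x t)) + enorm3 (A (x t)) := by
      have : ξ t = (ξ t + A (x t)) + (-(A (x t))) := by abel
      calc enorm3 (ξ t) = enorm3 ((ξ t + A (x t)) + (-(A (x t)))) := by rw [← this]
        _ ≤ enorm3 (ξ t + A (x t)) + enorm3 (-(A (x t))) := enorm3_add_le _ _
        _ = enorm3 (ξ t + A (x t)) + enorm3 (A (x t)) := by rw [enorm3_neg]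
    have h2 := hkey t ht
    have h3 := hAb t ht
    have h4 := hxB t ht
    have := mul_le_mul_of_nonneg_left h4 hcpos.le
    linarith
  -- assemble
  have h1cB : 0 ≤ (1 + c) * B := mul_nonneg (by linarith) hBnn
  refine ⟨(1 + c) * B + ε + M + K₀ + C₂ + 1, by positivity, fun t ht => ?_⟩
  set K : ℝ := (1 + c) * B + ε + M + K₀ + C₂ + 1 with hK
  have hKe : ∀ r : ℝ, 0 ≤ r → r ≤ K → Real.exp (r * t) ≤ Real.exp (K * t) :=
    fun r _ hr => Real.exp_le_exp.2 (mul_le_mul_of_nonneg_right hr ht)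
  have he0 : (1:ℝ) ≤ Real.exp (K * t) := by
    rw [show (1:ℝ) = Real.exp 0 by simp]
    exact Real.exp_le_exp.2 (by positivity)
  have heK₀ : Real.exp (K₀ * t) ≤ Real.exp (K * t) := hKe K₀ hK₀pos.le (by linarith)
  have heC₂ : Real.exp (C₂ * t) ≤ Real.exp (K * t) := hKe C₂ hC₂.le (by linarith)
  have h1 := hxB t ht
  have h2 := hξB t ht
  have hKge : (1 + c) * B + ε + M ≤ K := by linarith
  calc enorm3 (x t) + enorm3 (ξ t)
      ≤ (1 + c) * (B * Real.exp (K₀ * t)) + ε + M * Real.exp (C₂ * t) := by linarith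
    _ ≤ (1 + c) * (B * Real.exp (K * t)) + ε * Real.exp (K * t) + M * Real.exp (K * t) := by
        have hh1 := mul_le_mul_of_nonneg_left heK₀ h1cB
        have hh2 := mul_le_mul_of_nonneg_left heC₂ hM.le
        have hh3 : ε ≤ ε * Real.exp (K * t) := le_mul_of_one_le_right hεnn he0
        nlinarith
    _ = ((1 + c) * B + ε + M) * Real.exp (K * t) := by ring
    _ ≤ K * Real.exp (K * t) :=
        mul_le_mul_of_nonneg_right hKge (Real.exp_pos _).le
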